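/- arXiv:1012.2998 — 3 statements merged into one kernel-verified Lean document; each statement's English description precedes it below -/
import Mathlib

section
/- Let A be an n×n nonnegative real matrix. Then ρ(A) ≥ 1 if and only if there exists a nonnegative vector x with x ≠ 0 and A x ≥ x componentwise. -/
/-!
If `ρ(A) ≥ 1`, an eigenvalue `μ` of `A` with `|μ| = ρ(A)` has an eigenvector `v`, and the
triangle inequality gives `|v| ≤ |μ| |v| = |A v| ≤ A |v|`. Conversely, if `0 ≤ x ≤ A x` with
`x ≠ 0`, monotonicity of `A` gives `x ≤ Aᵏ x`, so `‖Aᵏ‖ ≥ 1` in the `ℓ∞` operator norm for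
every `k`, and Gelfand's formula `ρ(A) = lim ‖Aᵏ‖^(1/k)` yields `ρ(A) ≥ 1`.
-/

open Matrix Filter

attribute [local instance] Matrix.linftyOpNormedAddCommGroup Matrix.linftyOpNormedRing
  Matrix.linftyOpNormedAlgebra

theorem spectrum.nonempty_of_spectralRadius_ne_zero {𝕜 A : Type*} [NormedField 𝕜] [Ring A]
    [Algebra 𝕜 A] {a : A} (h : spectralRadius 𝕜 a ≠ 0) : (spectrum 𝕜 a).Nonempty := by
  by_contra he
  simp_all [spectralRadius, Set.not_nonempty_iff_eq_empty]

theorem one_le_spectralRadius_of_one_le_nnnorm_pow {A : Type*} [NormedRing A]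
    [NormedAlgebra ℂ A] [CompleteSpace A] {a : A} (h : ∀ k : ℕ, 1 ≤ ‖a ^ k‖₊) :
    1 ≤ spectralRadius ℂ a :=
  ge_of_tendsto' (spectrum.pow_nnnorm_pow_one_div_tendsto_nhds_spectralRadius a) fun k => by
    have hk : (0 : ℝ) ≤ 1 / k := one_div_nonneg.mpr k.cast_nonneg
    rw [← ENNReal.coe_rpow_of_nonneg _ hk]
    exact_mod_cast NNReal.one_le_rpow (h k) hk

namespace Matrix

variable {m n : Type*} [Fintype n]

theorem exists_mulVec_eq_smul_of_mem_spectrum {K : Type*} [Field K] [DecidableEq n]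
    {B : Matrix n n K} {μ : K} (hμ : μ ∈ spectrum K B) : ∃ v ≠ 0, B *ᵥ v = μ • v := by
  rw [← spectrum_toLin', ← Module.End.hasEigenvalue_iff_mem_spectrum] at hμ
  obtain ⟨v, hv⟩ := hμ.exists_hasEigenvector
  exact ⟨v, hv.2, hv.apply_eq_smul⟩

theorem norm_map_ofReal_mulVec_le {A : Matrix m n ℝ} (hA : ∀ i j, 0 ≤ A i j) (v : n → ℂ)
    (i : m) : ‖(A.map Complex.ofReal *ᵥ v) i‖ ≤ (A *ᵥ fun j => ‖v j‖) i :=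
  calc ‖∑ j, (A i j : ℂ) * v j‖ ≤ ∑ j, ‖(A i j : ℂ) * v j‖ := norm_sum_le _ _
    _ = (A *ᵥ fun j => ‖v j‖) i := by
      simp only [norm_mul, Complex.norm_real, Real.norm_of_nonneg (hA _ _)]; rfl

section Order

variable {R : Type*} [Semiring R] [PartialOrder R] [IsOrderedRing R]

theorem mulVec_mono_of_nonneg {A : Matrix m n R} (hA : ∀ i j, 0 ≤ A i j) :
    Monotone (A *ᵥ ·) :=
  fun _ _ huv i => Finset.sum_le_sum fun j _ => mul_le_mul_of_nonneg_left (huv j) (hA i j)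

theorem le_pow_mulVec_of_le_mulVec [DecidableEq n] {A : Matrix n n R} (hA : ∀ i j, 0 ≤ A i j)
    {x : n → R} (hx : x ≤ A *ᵥ x) : ∀ k : ℕ, x ≤ (A ^ k) *ᵥ x
  | 0 => by rw [pow_zero, one_mulVec]
  | k + 1 => by
    rw [pow_succ', ← mulVec_mulVec]
    exact hx.trans (mulVec_mono_of_nonneg hA (le_pow_mulVec_of_le_mulVec hA hx k))

end Order

theorem linfty_opNNNorm_map_ofReal [Fintype m] (A : Matrix m n ℝ) :
    ‖A.map Complex.ofReal‖₊ = ‖A‖₊ := by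
  simp [linfty_opNNNorm_def]

theorem one_le_linfty_opNNNorm_of_le_mulVec {M : Matrix n n ℝ} {x : n → ℝ} (hx0 : 0 ≤ x)
    (hx : x ≠ 0) (hMx : x ≤ M *ᵥ x) : 1 ≤ ‖M‖₊ := by
  have hnorm : ‖x‖₊ ≤ ‖M *ᵥ x‖₊ := by
    refine pi_nnnorm_le_iff.mpr fun i => ?_
    calc ‖x i‖₊ ≤ ‖(M *ᵥ x) i‖₊ := by
          rw [← NNReal.coe_le_coe, coe_nnnorm, coe_nnnorm, Real.norm_of_nonneg (hx0 i),
            Real.norm_of_nonneg ((hx0 i).trans (hMx i))]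
          exact hMx i
      _ ≤ ‖M *ᵥ x‖₊ := nnnorm_le_pi_nnnorm _ i
  exact le_of_mul_le_mul_right (by simpa using hnorm.trans (linfty_opNNNorm_mulVec M x))
    (nnnorm_pos.mpr hx)

end Matrix

/-- For a nonnegative square real matrix `A`, the spectral radius satisfies `ρ(A) ≥ 1`
iff there is a nonnegative nonzero vector `x` with `A x ≥ x` componentwise. -/
theorem stmt2 {n : ℕ} (A : Matrix (Fin n) (Fin n) ℝ) (hA : ∀ i j, 0 ≤ A i j) :
    1 ≤ spectralRadius ℂ (A.map Complex.ofReal) ↔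
      ∃ x : Fin n → ℝ, (∀ i, 0 ≤ x i) ∧ x ≠ 0 ∧ ∀ i, x i ≤ A.mulVec x i := by
  constructor
  · intro h
    obtain ⟨μ, hμ, hρ⟩ := spectrum.exists_nnnorm_eq_spectralRadius_of_nonempty
      (spectrum.nonempty_of_spectralRadius_ne_zero (one_pos.trans_le h).ne')
    obtain ⟨v, hv0, hv⟩ := exists_mulVec_eq_smul_of_mem_spectrum hμ
    have hμ1 : 1 ≤ ‖μ‖ := by exact_mod_cast hρ ▸ h
    refine ⟨fun i => ‖v i‖, fun i => norm_nonneg _, by simpa [funext_iff] using hv0, fun i => ?_⟩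
    calc ‖v i‖ ≤ ‖μ‖ * ‖v i‖ := le_mul_of_one_le_left (norm_nonneg _) hμ1
      _ = ‖(A.map Complex.ofReal *ᵥ v) i‖ := by simp [hv]
      _ ≤ (A *ᵥ fun j => ‖v j‖) i := norm_map_ofReal_mulVec_le hA v i
  · rintro ⟨x, hx0, hx, hAx⟩
    refine one_le_spectralRadius_of_one_le_nnnorm_pow fun k => ?_
    have hpow : A.map Complex.ofReal ^ k = (A ^ k).map Complex.ofReal :=
      (map_pow Complex.ofRealHom.mapMatrix A k).symm
    rw [hpow, linfty_opNNNorm_map_ofReal]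
    exact one_le_linfty_opNNNorm_of_le_mulVec hx0 hx (le_pow_mulVec_of_le_mulVec hA hAx k)
end

section
/- Let d > 0, let ε ∈ (0, 1/d), and let u be a vector of positive reals. Suppose a sequence of nonnegative vectors (r_i) satisfies r_{i+1} ≥ (A − B(r_i))·r_i for nonnegative matrices satisfying A·u ≥ u and B(r)·u ≤ (max-component of r)·d·u for all r with 0 ≤ r ≤ 1, and r_0 ≥ ε·u with r_i ≤ ε·1 for all i. Then for every i ≥ 0 one has r_i ≥ (1 − εd)^i · ε · u. -/
/-! Because `r i ≤ ε`, the bound on `B` gives `B (r i) *ᵥ u ≤ ε d • u`, so the nonnegative matrix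
`A - B (r i)` stretches `u` by at least `1 - ε d`. Nonnegative matrices are monotone, so a lower
bound `c • u ≤ r i` propagates to `(1 - ε d) c • u ≤ r (i + 1)`, and induction finishes. -/

open Matrix

section NonnegMatrix

variable {m n R : Type*} [Fintype n] [CommRing R] [PartialOrder R] [IsOrderedRing R]

theorem Matrix.mulVec_mono_of_nonneg_s5 {M : Matrix m n R} (hM : ∀ i j, 0 ≤ M i j) {x y : n → R}
    (hxy : x ≤ y) : M *ᵥ x ≤ M *ᵥ y :=
  fun i => dotProduct_le_dotProduct_of_nonneg_left hxy (hM i)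

theorem Matrix.smul_le_sub_mulVec {A B : Matrix n n R} {u : n → R} {δ : R}
    (hAu : u ≤ A *ᵥ u) (hBu : B *ᵥ u ≤ δ • u) : (1 - δ) • u ≤ (A - B) *ᵥ u := by
  rw [sub_smul, one_smul, sub_mulVec]
  exact sub_le_sub hAu hBu

theorem pow_mul_smul_le_of_mulVec_le {M : ℕ → Matrix n n R} (hM : ∀ i j k, 0 ≤ M i j k)
    {u : n → R} {ρ c : R} (hρ : 0 ≤ ρ) (hc : 0 ≤ c) (hMu : ∀ i, ρ • u ≤ M i *ᵥ u)
    {r : ℕ → n → R} (hr : ∀ i, M i *ᵥ r i ≤ r (i + 1)) (hr0 : c • u ≤ r 0) :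
    ∀ i, (ρ ^ i * c) • u ≤ r i := by
  intro i
  induction i with
  | zero => simpa using hr0
  | succ i ih =>
    calc (ρ ^ (i + 1) * c) • u = (ρ ^ i * c) • ρ • u := by rw [smul_smul]; ring_nf
      _ ≤ (ρ ^ i * c) • M i *ᵥ u := smul_le_smul_of_nonneg_left (hMu i) (by positivity)
      _ = M i *ᵥ ((ρ ^ i * c) • u) := (mulVec_smul _ _ _).symm
      _ ≤ M i *ᵥ r i := mulVec_mono_of_nonneg_s5 (hM i) ih
      _ ≤ r (i + 1) := hr i

end NonnegMatrix

theorem stmt5_general {n : ℕ} (u : Fin n → ℝ)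
    (d : ℝ) (hd : 0 < d) (ε : ℝ) (hε : 0 < ε) (hεd : ε < 1 / d)
    (A : Matrix (Fin n) (Fin n) ℝ)
    (hAu : ∀ j, u j ≤ A.mulVec u j)
    (B : (Fin n → ℝ) → Matrix (Fin n) (Fin n) ℝ)
    (hB : ∀ (x : Fin n → ℝ) (c : ℝ), 0 ≤ c → (∀ j, 0 ≤ x j) → (∀ j, x j ≤ c) →
          ∀ j, (B x).mulVec u j ≤ c * d * u j)
    (r : ℕ → Fin n → ℝ) (hr : ∀ i j, 0 ≤ r i j)
    (hrec : ∀ i j, (A - B (r i)).mulVec (r i) j ≤ r (i + 1) j)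
    (hABnn : ∀ i j k, 0 ≤ (A - B (r i)) j k)
    (hr0 : ∀ j, ε * u j ≤ r 0 j)
    (hrb : ∀ i j, r i j ≤ ε) :
    ∀ i j, (1 - ε * d) ^ i * ε * u j ≤ r i j := by
  have hεd' : ε * d < 1 := by rwa [lt_div_iff₀ hd] at hεd
  have hexpand : ∀ i, (1 - ε * d) • u ≤ (A - B (r i)) *ᵥ u := fun i =>
    smul_le_sub_mulVec hAu (hB (r i) ε hε.le (hr i) (hrb i))
  exact pow_mul_smul_le_of_mulVec_le hABnn (by linarith) hε.le hexpand hrec hr0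

/-- Key induction lemma: if `r 0 ≥ ε·u`, each `r i ≤ ε` componentwise,
`r (i+1) ≥ (A - B(r i))·(r i)` with `A·u ≥ u`, `B(r)·u ≤ c·d·u` whenever `0 ≤ r ≤ c`,
and the matrices `A - B(r i)` are nonnegative, then `r i ≥ (1 - εd)^i·ε·u` for all `i`. -/
theorem stmt5 {n : ℕ} (u : Fin n → ℝ) (hu : ∀ j, 0 < u j)
    (d : ℝ) (hd : 0 < d) (ε : ℝ) (hε : 0 < ε) (hεd : ε < 1 / d)
    (A : Matrix (Fin n) (Fin n) ℝ) (hA : ∀ i j, 0 ≤ A i j)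
    (hAu : ∀ j, u j ≤ A.mulVec u j)
    (B : (Fin n → ℝ) → Matrix (Fin n) (Fin n) ℝ)
    (hBnn : ∀ x : Fin n → ℝ, (∀ j, 0 ≤ x j) → ∀ i j, 0 ≤ B x i j)
    (hB : ∀ (x : Fin n → ℝ) (c : ℝ), 0 ≤ c → (∀ j, 0 ≤ x j) → (∀ j, x j ≤ c) →
          ∀ j, (B x).mulVec u j ≤ c * d * u j)
    (r : ℕ → Fin n → ℝ) (hr : ∀ i j, 0 ≤ r i j)
    (hrec : ∀ i j, (A - B (r i)).mulVec (r i) j ≤ r (i + 1) j)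
    (hABnn : ∀ i j k, 0 ≤ (A - B (r i)) j k)
    (hr0 : ∀ j, ε * u j ≤ r 0 j)
    (hrb : ∀ i j, r i j ≤ ε) :
    ∀ i j, (1 - ε * d) ^ i * ε * u j ≤ r i j :=
  stmt5_general u d hd ε hε hεd A hAu B hB r hr hrec hABnn hr0 hrb
end

section
/- Let A be an irreducible (strongly connected) nonnegative n×n matrix with ρ(A) ≥ 1 and let u > 0 satisfy A u ≥ u. Suppose positive reals (ε_n) with ε_n → 0, and vectors r^{(n)} with ε_n·u ≤ r^{(n)} ≤ ε_n·1 and r^{(n+i)} ≥ (1−ε_n d)^i ε_n u for all n ≥ n_0 and all i (for some d > 0 and n_0 with ε_{n_0} d < 1). Then ∑_{i=0}^∞ r^{(i)}_X = ∞ for every coordinate X. -/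
open Filter

/-! The tail of the series starting at any `m ≥ n₀` dominates the geometric series
`∑ᵢ (1 - ε m d)ⁱ ε m u_X = u_X / d`, a positive bound independent of `m`; since the tails of a
convergent series tend to `0`, the series diverges. -/

theorem ENNReal.tsum_eq_top_of_frequently_le_tsum_add {f : ℕ → ENNReal} {c : ENNReal}
    (hc : c ≠ 0) (h : ∃ᶠ m in atTop, c ≤ ∑' i, f (i + m)) : ∑' i, f i = ⊤ := by
  by_contra hne
  have htail_small : ∀ᶠ m in atTop, ∑' i, f (i + m) < c :=
    (ENNReal.tendsto_sum_nat_add f hne).eventually_lt_const (pos_iff_ne_zero.2 hc)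
  obtain ⟨m, hle, hlt⟩ := (h.and_eventually htail_small).exists
  exact hle.not_gt hlt

theorem ENNReal.ofReal_div_le_tsum_of_geometric_le {q a : ℝ} (hq₀ : 0 < q) (hq₁ : q < 1)
    (ha : 0 ≤ a) {g : ℕ → ℝ} (hg : ∀ i, (1 - q) ^ i * a ≤ g i) :
    ENNReal.ofReal (a / q) ≤ ∑' i, ENNReal.ofReal (g i) := by
  have hratio₀ : 0 ≤ 1 - q := by linarith
  have hratio₁ : 1 - q < 1 := by linarith
  have hsum : ∑' i : ℕ, (1 - q) ^ i * a = a / q := by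
    rw [tsum_mul_right, tsum_geometric_of_lt_one hratio₀ hratio₁]
    ring
  calc ENNReal.ofReal (a / q)
      = ∑' i : ℕ, ENNReal.ofReal ((1 - q) ^ i * a) := by
        rw [← hsum, ENNReal.ofReal_tsum_of_nonneg (fun i => by positivity)
          ((summable_geometric_of_lt_one hratio₀ hratio₁).mul_right a)]
    _ ≤ ∑' i, ENNReal.ofReal (g i) :=
        ENNReal.tsum_le_tsum fun i => ENNReal.ofReal_le_ofReal (hg i)

theorem stmt18_general {n : ℕ}
    (u : Fin n → ℝ) (hu : ∀ i, 0 < u i)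
    (d : ℝ) (hd : 0 < d)
    (ε : ℕ → ℝ) (hεpos : ∀ m, 0 < ε m)
    (n₀ : ℕ) (hn₀ : ∀ m ≥ n₀, ε m * d < 1)
    (r : ℕ → Fin n → ℝ)
    (hgeo : ∀ m ≥ n₀, ∀ (i : ℕ) (X : Fin n),
      (1 - ε m * d) ^ i * ε m * u X ≤ r (m + i) X) :
    ∀ X : Fin n, ∑' i : ℕ, ENNReal.ofReal (r i X) = ⊤ := by
  intro X
  refine ENNReal.tsum_eq_top_of_frequently_le_tsum_add
    (ENNReal.ofReal_pos.2 (div_pos (hu X) hd)).ne' (Eventually.frequently ?_)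
  filter_upwards [eventually_ge_atTop n₀] with m hm
  have hcancel : ε m * u X / (ε m * d) = u X / d := mul_div_mul_left _ _ (hεpos m).ne'
  rw [← hcancel]
  refine ENNReal.ofReal_div_le_tsum_of_geometric_le (mul_pos (hεpos m) hd) (hn₀ m hm)
    (mul_pos (hεpos m) (hu X)).le fun i => ?_
  rw [← mul_assoc, add_comm]
  exact hgeo m hm i X

/-- Key divergence step: for an irreducible nonnegative matrix `A` with `ρ(A) ≥ 1` and
`u > 0` with `A·u ≥ u`, if positive reals `ε m → 0` and nonnegative vectors `r m` satisfy
`ε m·u ≤ r m ≤ ε m·1` and `r (m+i) ≥ (1 - ε m·d)^i·ε m·u` for `m ≥ n₀`, then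
`∑ᵢ (r i)_X = ∞` for every coordinate `X`. -/
theorem stmt18 {n : ℕ} (A : Matrix (Fin n) (Fin n) ℝ) (hA : ∀ i j, 0 ≤ A i j)
    (hconn : ∀ i j, ∃ k : ℕ, 1 ≤ k ∧ 0 < (A ^ k) i j)
    (hρ : 1 ≤ spectralRadius ℂ (A.map Complex.ofReal))
    (u : Fin n → ℝ) (hu : ∀ i, 0 < u i) (hAu : ∀ i, u i ≤ A.mulVec u i)
    (d : ℝ) (hd : 0 < d)
    (ε : ℕ → ℝ) (hεpos : ∀ m, 0 < ε m) (hεmono : Antitone ε)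
    (hεlim : Tendsto ε atTop (nhds 0))
    (n₀ : ℕ) (hn₀ : ∀ m ≥ n₀, ε m * d < 1)
    (r : ℕ → Fin n → ℝ) (hrnn : ∀ m X, 0 ≤ r m X)
    (hlow : ∀ m X, ε m * u X ≤ r m X) (hhigh : ∀ m X, r m X ≤ ε m)
    (hgeo : ∀ m ≥ n₀, ∀ (i : ℕ) (X : Fin n),
      (1 - ε m * d) ^ i * ε m * u X ≤ r (m + i) X) :
    ∀ X : Fin n, ∑' i : ℕ, ENNReal.ofReal (r i X) = ⊤ :=
  stmt18_general u hu d hd ε hεpos n₀ hn₀ r hgeo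
end
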